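/- The automorphism t = ac of the rooted binary tree lies in the normalizer of the group SHAut({0,1}*) of spherically homogeneous automorphisms: for every spherically homogeneous automorphism g, both t⁻¹gt and tgt⁻¹ are spherically homogeneous. -/

import Mathlib

/-- The states of the automaton `𝒜` generating the group `𝒢`. -/
inductive St
  | A | B | C | D
deriving DecidableEq

/-- The transition function of the automaton `𝒜`:
`a = (d,d)σ`, `b = (c,c)`, `c = (a,b)`, `d = (b,a)`. -/
def tr2 : St → ZMod 2 → St
  | .A, _ => .D
  | .B, _ => .C
  | .C, u => if u = 0 then .A else .B
  | .D, u => if u = 0 then .B else .A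

/-- The output function of the automaton `𝒜`: the state `a` flips the current letter,
all other states leave it unchanged. -/
def outp : St → ZMod 2 → ZMod 2
  | .A, u => u + 1
  | .B, u => u
  | .C, u => u
  | .D, u => u

/-- The state reached from `s` after reading the first `n` letters of `x`. -/
def stAt (s : St) (x : ℕ → ZMod 2) : ℕ → St
  | 0 => s
  | n + 1 => tr2 (stAt s x n) (x n)

/-- The action on the boundary `ℤ_2^∞` of the initial automaton `𝒜_s`. -/
def act (s : St) (x : ℕ → ZMod 2) : ℕ → ZMod 2 :=
  fun n => outp (stAt s x n) (x n)

lemma stAt_act (s : St) (x : ℕ → ZMod 2) (n : ℕ) : stAt s (act s x) n = stAt s x n := by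
  induction n with
  | zero => rfl
  | succ n ih =>
      show tr2 (stAt s (act s x) n) (act s x n) = tr2 (stAt s x n) (x n)
      rw [ih]
      show tr2 (stAt s x n) (outp (stAt s x n) (x n)) = tr2 (stAt s x n) (x n)
      cases stAt s x n <;> first | rfl | (simp [tr2, outp]; done) | (simp [tr2, outp] <;> congr)

lemma act_invol (s : St) : Function.Involutive (act s) := by
  intro x
  funext n
  show outp (stAt s (act s x) n) (act s x n) = x n
  rw [stAt_act]
  show outp (stAt s x n) (outp (stAt s x n) (x n)) = x n
  cases stAt s x n <;> simp [outp, add_assoc, show (1 + 1 : ZMod 2) = 0 from rfl]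

/-- The automorphism of the binary tree defined by the initial automaton `𝒜_s`,
as a permutation of the boundary `ℤ_2^∞`. -/
def actPerm (s : St) : Equiv.Perm (ℕ → ZMod 2) := (act_invol s).toPerm

/-- The automorphism `t = ac` (apply `a` first, then `c`), as a permutation of the
boundary of the binary tree. Note that for permutations `(f * g) w = f (g w)`, so
`t = ac` in the paper's left-acts-first convention is `actPerm C * actPerm A`. -/
def tP : Equiv.Perm (ℕ → ZMod 2) := actPerm St.C * actPerm St.A

/-- A transformation of the boundary is spherically homogeneous if it acts
coordinatewise by a sequence of permutations of `ℤ/2ℤ`. -/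
def SH (g : (ℕ → ZMod 2) → ℕ → ZMod 2) : Prop :=
  ∃ s : ℕ → Equiv.Perm (ZMod 2), ∀ x n, g x n = s n (x n)

/-! Encode each state `s` of the automaton by its level and parity in `ZMod 2`. Reading a letter
`u` raises the level by one and adds `level * u + level + 1` to the parity, and the output letter
is `u + (1 + level) * (1 + parity)`. Hence the level after `n` letters does not depend on the
input, the parity is an affine function of it, and every state acts on `ℕ → ZMod 2` as an affine
map over `ZMod 2`; so do `t` and `t⁻¹`. A spherically homogeneous map of the binary tree is a
translation, and conjugating a translation by an affine bijection gives a translation. -/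

namespace St

def level : St → ZMod 2
  | A => 0 | B => 0 | C => 1 | D => 1

def parity : St → ZMod 2
  | A => 0 | B => 1 | C => 0 | D => 1

lemma level_tr2 (s : St) (u : ZMod 2) : (tr2 s u).level = s.level + 1 := by
  revert u; cases s <;> decide

lemma parity_tr2 (s : St) (u : ZMod 2) :
    (tr2 s u).parity = s.parity + s.level * u + s.level + 1 := by
  revert u; cases s <;> decide

lemma outp_eq (s : St) (u : ZMod 2) : outp s u = u + (1 + s.level) * (1 + s.parity) := by
  revert u; cases s <;> decide

end St

lemma level_stAt (s : St) (x : ℕ → ZMod 2) (n : ℕ) : (stAt s x n).level = s.level + n := by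
  induction n with
  | zero => simp [stAt]
  | succ n ih => rw [stAt, St.level_tr2, ih]; push_cast; ring

lemma exists_affineMap_parity_stAt (s : St) (n : ℕ) :
    ∃ F : (ℕ → ZMod 2) →ᵃ[ZMod 2] ZMod 2, ∀ x, (stAt s x n).parity = F x := by
  induction n with
  | zero => exact ⟨AffineMap.const _ _ s.parity, fun _ => rfl⟩
  | succ n ih =>
    obtain ⟨F, hF⟩ := ih
    refine ⟨F + (s.level + n) • AffineMap.proj n + AffineMap.const _ _ (s.level + n + 1),
      fun x => ?_⟩
    simp only [stAt, St.parity_tr2, level_stAt, hF, AffineMap.coe_add, AffineMap.coe_smul,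
      Pi.add_apply, Pi.smul_apply, AffineMap.proj_apply, AffineMap.const_apply, smul_eq_mul]
    ring

lemma exists_affineMap_coe_eq_act (s : St) :
    ∃ F : (ℕ → ZMod 2) →ᵃ[ZMod 2] (ℕ → ZMod 2), ⇑F = act s := by
  choose F hF using exists_affineMap_parity_stAt s
  refine ⟨AffineMap.pi fun n =>
    AffineMap.proj n + (1 + (s.level + n)) • (AffineMap.const _ _ 1 + F n), ?_⟩
  funext x n
  simp only [AffineMap.pi_apply, act, St.outp_eq, level_stAt, hF, AffineMap.coe_add,
    AffineMap.coe_smul, Pi.add_apply, Pi.smul_apply, AffineMap.proj_apply,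
    AffineMap.const_apply, smul_eq_mul]

lemma exists_affineMap_coe_eq_actPerm_mul (s s' : St) :
    ∃ F : (ℕ → ZMod 2) →ᵃ[ZMod 2] (ℕ → ZMod 2), ⇑F = ⇑(actPerm s * actPerm s') := by
  obtain ⟨F, hF⟩ := exists_affineMap_coe_eq_act s
  obtain ⟨F', hF'⟩ := exists_affineMap_coe_eq_act s'
  exact ⟨F.comp F', by rw [AffineMap.coe_comp, hF, hF']; rfl⟩

lemma actPerm_inv (s : St) : (actPerm s)⁻¹ = actPerm s :=
  Function.Involutive.toPerm_symm _

lemma tP_inv : tP⁻¹ = actPerm St.A * actPerm St.C := by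
  rw [tP, mul_inv_rev, actPerm_inv, actPerm_inv]

lemma perm_zmod_two_apply (σ : Equiv.Perm (ZMod 2)) (u : ZMod 2) : σ u = u + σ 0 := by
  revert σ u; decide

lemma SH.exists_eq_add {g : (ℕ → ZMod 2) → ℕ → ZMod 2} (hg : SH g) :
    ∃ c, ∀ x, g x = x + c := by
  obtain ⟨σ, hσ⟩ := hg
  exact ⟨fun n => σ n 0, fun x => funext fun n => (hσ x n).trans (perm_zmod_two_apply _ _)⟩

lemma SH_add_right (c : ℕ → ZMod 2) : SH (· + c) :=
  ⟨fun n => Equiv.addRight (c n), fun _ _ => rfl⟩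

lemma SH_affineMap_comp {g : (ℕ → ZMod 2) → ℕ → ZMod 2} (hg : SH g)
    (F : (ℕ → ZMod 2) →ᵃ[ZMod 2] (ℕ → ZMod 2)) {G : (ℕ → ZMod 2) → ℕ → ZMod 2}
    (hFG : Function.RightInverse G F) : SH fun w => F (g (G w)) := by
  obtain ⟨c, hc⟩ := hg.exists_eq_add
  have h : ∀ w, F (g (G w)) = w + F.linear c := fun w => by
    rw [hc, add_comm, ← vadd_eq_add, F.map_vadd, hFG w, vadd_eq_add, add_comm]
  simpa only [h] using SH_add_right (F.linear c)

/-- The automorphism `t = ac` lies in the normalizer of `SHAut({0,1}*)`: for every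
spherically homogeneous automorphism `g`, both `t⁻¹gt` and `tgt⁻¹` (products read left
to right, the left factor acting first) are spherically homogeneous. -/
theorem stmt_15 (g : (ℕ → ZMod 2) → ℕ → ZMod 2) (hg : SH g) :
    SH (fun w => tP (g (tP⁻¹ w))) ∧ SH (fun w => tP⁻¹ (g (tP w))) := by
  obtain ⟨T, hT⟩ := exists_affineMap_coe_eq_actPerm_mul St.C St.A
  obtain ⟨T', hT'⟩ := exists_affineMap_coe_eq_actPerm_mul St.A St.C
  rw [← tP] at hT
  rw [← tP_inv] at hT'
  constructor
  · rw [← hT]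
    exact SH_affineMap_comp hg T (hT ▸ tP.apply_symm_apply)
  · rw [← hT']
    exact SH_affineMap_comp hg T' (hT' ▸ tP.symm_apply_apply)
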